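/- Let P be a uniform, b-bounded AC-MAS over an infinite interpretation domain U with adom(s0) ⊆ C, and let U' be an interpretation domain with C ⊆ U' and |U'| ≥ 2b + |C| + N_Ag. Then any ⊕-abstraction P' of P over U' is ⊕-bisimilar to P. -/

import Mathlib

/-!  Common formalisation of artifact-centric multi-agent systems (AC-MAS). -/

open Set

/-- A database schema: a finite type of relation symbols, each with an arity. -/
structure Schema : Type 1 where
  Rel : Type
  [relFin : Fintype Rel]
  arity : Rel → ℕ

attribute [instance] Schema.relFin

/-- A `D`-instance over an interpretation domain `U`: every relation symbol is
interpreted as a finite set of tuples over `U`. -/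
structure Inst (D : Schema) (U : Type) : Type where
  rel : ∀ r : D.Rel, Set (Fin (D.arity r) → U)
  finite : ∀ r, (rel r).Finite

/-- The active domain of an instance. -/
def Inst.adom {D : Schema} {U : Type} (I : Inst D U) : Set U :=
  { u | ∃ (r : D.Rel) (t : Fin (D.arity r) → U), t ∈ I.rel r ∧ ∃ j, t j = u }

/-- The schema `D` together with a primed copy of every relation symbol. -/
def Schema.double (D : Schema) : Schema where
  Rel := D.Rel ⊕ D.Rel
  relFin := inferInstance
  arity := Sum.elim D.arity D.arity

/-- The disjunctive join `I ⊕ J`: unprimed symbols are interpreted as in `I`,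
primed symbols as in `J`. -/
def Inst.oplus {D : Schema} {U : Type} (I J : Inst D U) : Inst D.double U where
  rel := fun r => match r with
    | .inl r₀ => I.rel r₀
    | .inr r₀ => J.rel r₀
  finite := fun r => by
    cases r with
    | inl r₀ => exact I.finite r₀
    | inr r₀ => exact J.finite r₀

/-- Image of an instance under a map of domains. -/
def Inst.map {D : Schema} {C U : Type} (f : C → U) (I : Inst D C) : Inst D U where
  rel := fun r => (fun t => f ∘ t) '' I.rel r
  finite := fun r => (I.finite r).image _

/-! ### First-order formulas -/

/-- Terms: variables (natural numbers) or constants from `C`. -/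
abbrev Term (C : Type) := ℕ ⊕ C

def Term.varsF {C : Type} : Term C → Finset ℕ
  | .inl x => {x}
  | .inr _ => ∅

def Term.constsS {C : Type} : Term C → Set C
  | .inl _ => ∅
  | .inr c => {c}

def Term.val {C U : Type} (cst : C → U) (σ : ℕ → U) : Term C → U
  | .inl x => σ x
  | .inr c => cst c

/-- First-order formulas over schema `D`, with equality, constants from `C`
and no function symbols. -/
inductive FO (D : Schema) (C : Type) : Type where
  | eq : Term C → Term C → FO D C
  | rel : (r : D.Rel) → (Fin (D.arity r) → Term C) → FO D C
  | not : FO D C → FO D C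
  | imp : FO D C → FO D C → FO D C
  | all : ℕ → FO D C → FO D C

namespace FO

variable {D : Schema} {C : Type}

/-- Free variables. -/
def free : FO D C → Finset ℕ
  | .eq t₁ t₂ => t₁.varsF ∪ t₂.varsF
  | .rel _ ts => Finset.univ.biUnion fun j => (ts j).varsF
  | .not φ => φ.free
  | .imp φ ψ => φ.free ∪ ψ.free
  | .all x φ => φ.free.erase x

/-- All variables. -/
def vars : FO D C → Finset ℕ
  | .eq t₁ t₂ => t₁.varsF ∪ t₂.varsF
  | .rel _ ts => Finset.univ.biUnion fun j => (ts j).varsF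
  | .not φ => φ.vars
  | .imp φ ψ => φ.vars ∪ ψ.vars
  | .all x φ => insert x φ.vars

/-- Constants mentioned in a formula. -/
def consts : FO D C → Set C
  | .eq t₁ t₂ => t₁.constsS ∪ t₂.constsS
  | .rel _ ts => ⋃ j, (ts j).constsS
  | .not φ => φ.consts
  | .imp φ ψ => φ.consts ∪ ψ.consts
  | .all _ φ => φ.consts

/-- The formula mentions only relation symbols from `R`. -/
def UsesOnly (R : Set D.Rel) : FO D C → Prop
  | .eq _ _ => True
  | .rel r _ => r ∈ R
  | .not φ => φ.UsesOnly R
  | .imp φ ψ => φ.UsesOnly R ∧ ψ.UsesOnly R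
  | .all _ φ => φ.UsesOnly R

/-- Satisfaction of FO-formulas, with active-domain quantification. -/
def sat {U : Type} (cst : C → U) (I : Inst D U) : (ℕ → U) → FO D C → Prop
  | σ, .eq t₁ t₂ => t₁.val cst σ = t₂.val cst σ
  | σ, .rel r ts => (fun j => (ts j).val cst σ) ∈ I.rel r
  | σ, .not φ => ¬ sat cst I σ φ
  | σ, .imp φ ψ => sat cst I σ φ → sat cst I σ ψ
  | σ, .all x φ => ∀ u ∈ I.adom, sat cst I (Function.update σ x u) φ

end FO

/-! ### Agents and AC-MAS -/

/-- The signature of an agent: a finite set of action types with parameter counts. -/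
structure AgentSig : Type 1 where
  Act : Type
  [actFin : Fintype Act]
  np : Act → ℕ

attribute [instance] AgentSig.actFin

/-- A ground action: an action type together with ground parameters. -/
def GAct (g : AgentSig) (U : Type) : Type := Σ a : g.Act, Fin (g.np a) → U

/-- Renaming of ground-action parameters. -/
def GAct.map {g : AgentSig} {U U' : Type} (f : U → U') : GAct g U → GAct g U'
  | ⟨a, u⟩ => ⟨a, fun j => f (u j)⟩

/-- An agent: local states structured as database instances, and a protocol. -/
structure Agent (D : Schema) (g : AgentSig) (U : Type) : Type where
  L : Set (Inst D U)
  Pr : Inst D U → Set (GAct g U)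

/-- A global state: one local database instance per agent `0, …, n`
(agent `0` is the environment). -/
abbrev GState (D : Schema) (n : ℕ) (U : Type) := Fin (n+1) → Inst D U

/-- A joint (global) ground action. -/
abbrev JAct {n : ℕ} (sig : Fin (n+1) → AgentSig) (U : Type) : Type := ∀ i, GAct (sig i) U

def JAct.map {n : ℕ} {sig : Fin (n+1) → AgentSig} {U U' : Type} (f : U → U')
    (a : JAct sig U) : JAct sig U' := fun i => (a i).map f

/-- The set of individuals occurring as parameters of a joint ground action. -/
def actElems {n : ℕ} {sig : Fin (n+1) → AgentSig} {U : Type} (a : JAct sig U) : Set U :=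
  { u | ∃ (i : Fin (n+1)) (j : Fin ((sig i).np (a i).1)), (a i).2 j = u }

/-- Active domain of a family of instances (e.g. a global state). -/
def adomF {D : Schema} {X U : Type} (s : X → Inst D U) : Set U := ⋃ i, (s i).adom

/-- The global instance `D_s` associated with a global state. -/
def gInst {D : Schema} {n : ℕ} {U : Type} (s : GState D n U) : Inst D U where
  rel := fun r => ⋃ i, (s i).rel r
  finite := fun r => Set.finite_iUnion fun i => (s i).finite r

/-- Componentwise disjunctive join of two global states. -/
def oplusG {D : Schema} {n : ℕ} {U : Type} (s t : GState D n U) : GState D.double n U :=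
  fun i => (s i).oplus (t i)

/-- An artifact-centric multi-agent system. -/
structure ACMAS (D : Schema) {n : ℕ} (sig : Fin (n+1) → AgentSig) {U : Type}
    (Ag : ∀ i, Agent D (sig i) U) : Type where
  /-- set of (reachable) global states -/
  S : Set (GState D n U)
  /-- initial global state -/
  s0 : GState D n U
  s0_mem : s0 ∈ S
  states_local : ∀ s ∈ S, ∀ i, s i ∈ (Ag i).L
  /-- global transition function -/
  τ : GState D n U → JAct sig U → Set (GState D n U)
  /-- `τ` is defined only on protocol-enabled joint actions -/
  tau_enabled : ∀ s a, (τ s a).Nonempty → ∀ i, a i ∈ (Ag i).Pr (s i)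
  tau_closed : ∀ s ∈ S, ∀ a, τ s a ⊆ S

namespace ACMAS

variable {D : Schema} {n : ℕ} {sig : Fin (n+1) → AgentSig} {U : Type}
  {Ag : ∀ i, Agent D (sig i) U}

/-- The transition relation `s → t`. -/
def Tr (M : ACMAS D sig Ag) (s t : GState D n U) : Prop := ∃ a, t ∈ M.τ s a

/-- Epistemic indistinguishability for agent `i`. -/
def Epi (M : ACMAS D sig Ag) (i : Fin (n+1)) (s t : GState D n U) : Prop :=
  s ∈ M.S ∧ t ∈ M.S ∧ s i = t i

/-- Union of the epistemic relations of agents `1, …, n`. -/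
def EpiAny (M : ACMAS D sig Ag) (s t : GState D n U) : Prop :=
  ∃ i : Fin n, M.Epi i.succ s t

/-- The standard assumptions: the transition relation is serial and `S` is
exactly the set of states reachable from `s0`. -/
def Std (M : ACMAS D sig Ag) : Prop :=
  (∀ s ∈ M.S, ∃ t, M.Tr s t) ∧ M.S = { s | Relation.ReflTransGen M.Tr M.s0 s }

/-- An (infinite) run. -/
def IsRun (M : ACMAS D sig Ag) (r : ℕ → GState D n U) : Prop :=
  (∀ k, r k ∈ M.S) ∧ ∀ k, M.Tr (r k) (r (k+1))

/-- A temporal-epistemic run. -/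
def IsTERun (M : ACMAS D sig Ag) (r : ℕ → GState D n U) : Prop :=
  (∀ k, r k ∈ M.S) ∧ ∀ k, M.Tr (r k) (r (k+1)) ∨ M.EpiAny (r k) (r (k+1))

end ACMAS

/-! ### Isomorphisms and equivalent assignments -/

/-- `ι` is a witness for the isomorphism of the families `s` and `s'`:
a constant-preserving bijection between the active domains extended with the
constants, preserving all relations componentwise. -/
def IsWitness {D : Schema} {X C U U' : Type} (cst : C → U) (cst' : C → U')
    (ι : U → U') (s : X → Inst D U) (s' : X → Inst D U') : Prop :=
  Set.BijOn ι (adomF s ∪ Set.range cst) (adomF s' ∪ Set.range cst') ∧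
  (∀ c, ι (cst c) = cst' c) ∧
  ∀ (i : X) (r : D.Rel) (t : Fin (D.arity r) → U),
    (∀ j, t j ∈ adomF s ∪ Set.range cst) →
    (t ∈ (s i).rel r ↔ (fun j => ι (t j)) ∈ (s' i).rel r)

/-- Isomorphism of families of instances (in particular global states). -/
def Iso {D : Schema} {X C U U' : Type} (cst : C → U) (cst' : C → U')
    (s : X → Inst D U) (s' : X → Inst D U') : Prop :=
  ∃ ι, IsWitness cst cst' ι s s'

/-- Equivalent assignments for a set `V` of variables w.r.t. `s` and `s'`. -/
def EqAssign {D : Schema} {n : ℕ} {C U U' : Type} (cst : C → U) (cst' : C → U')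
    (V : Set ℕ) (σ : ℕ → U) (σ' : ℕ → U')
    (s : GState D n U) (s' : GState D n U') : Prop :=
  ∃ γ : U → U',
    Set.BijOn γ (adomF s ∪ Set.range cst ∪ σ '' V)
      (adomF s' ∪ Set.range cst' ∪ σ' '' V) ∧
    IsWitness cst cst' γ s s' ∧
    ∀ x ∈ V, σ' x = γ (σ x)

/-! ### Simulations and bisimulations -/

section Bisim

variable {D : Schema} {n : ℕ} {sig sig' : Fin (n+1) → AgentSig} {C U U' : Type}
  {Ag : ∀ i, Agent D (sig i) U} {Ag' : ∀ i, Agent D (sig' i) U'}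

/-- Simulation between two AC-MAS. -/
def IsSim (cst : C → U) (cst' : C → U')
    (M : ACMAS D sig Ag) (M' : ACMAS D sig' Ag')
    (R : GState D n U → GState D n U' → Prop) : Prop :=
  ∀ s s', R s s' →
    s ∈ M.S ∧ s' ∈ M'.S ∧ Iso cst cst' s s' ∧
    ∀ t, M.Tr s t → ∃ t', M'.Tr s' t' ∧ R t t'

/-- Bisimulation. -/
def IsBisim (cst : C → U) (cst' : C → U')
    (M : ACMAS D sig Ag) (M' : ACMAS D sig' Ag')
    (R : GState D n U → GState D n U' → Prop) : Prop :=
  IsSim cst cst' M M' R ∧ IsSim cst' cst M' M (fun s' s => R s s')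

/-- Bisimilarity of states. -/
def Bisimilar (cst : C → U) (cst' : C → U')
    (M : ACMAS D sig Ag) (M' : ACMAS D sig' Ag')
    (s : GState D n U) (s' : GState D n U') : Prop :=
  ∃ R, IsBisim cst cst' M M' R ∧ R s s'

/-- `P ≈ P'`: the two systems are bisimilar. -/
def BisimSys (cst : C → U) (cst' : C → U')
    (M : ACMAS D sig Ag) (M' : ACMAS D sig' Ag') : Prop :=
  Bisimilar cst cst' M M' M.s0 M'.s0

/-- ⊕-simulation. -/
def IsOSim (cst : C → U) (cst' : C → U')
    (M : ACMAS D sig Ag) (M' : ACMAS D sig' Ag')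
    (R : GState D n U → GState D n U' → Prop) : Prop :=
  ∀ s s', R s s' →
    s ∈ M.S ∧ s' ∈ M'.S ∧ Iso cst cst' s s' ∧
    (∀ t, M.Tr s t → ∃ t', M'.Tr s' t' ∧
        Iso cst cst' (oplusG s t) (oplusG s' t') ∧ R t t') ∧
    (∀ (t : GState D n U) (i : Fin n), M.Epi i.succ s t →
        ∃ t', M'.Epi i.succ s' t' ∧
          Iso cst cst' (oplusG s t) (oplusG s' t') ∧ R t t')

/-- ⊕-bisimulation. -/
def IsOBisim (cst : C → U) (cst' : C → U')
    (M : ACMAS D sig Ag) (M' : ACMAS D sig' Ag')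
    (R : GState D n U → GState D n U' → Prop) : Prop :=
  IsOSim cst cst' M M' R ∧ IsOSim cst' cst M' M (fun s' s => R s s')

/-- ⊕-bisimilarity of states. -/
def OBisimilar (cst : C → U) (cst' : C → U')
    (M : ACMAS D sig Ag) (M' : ACMAS D sig' Ag')
    (s : GState D n U) (s' : GState D n U') : Prop :=
  ∃ R, IsOBisim cst cst' M M' R ∧ R s s'

/-- The two systems are ⊕-bisimilar. -/
def OBisimSys (cst : C → U) (cst' : C → U')
    (M : ACMAS D sig Ag) (M' : ACMAS D sig' Ag') : Prop :=
  OBisimilar cst cst' M M' M.s0 M'.s0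

end Bisim

/-! ### Uniformity and boundedness -/

section Uniform

variable {D : Schema} {n : ℕ} {sig : Fin (n+1) → AgentSig} {C U : Type}
  {Ag : ∀ i, Agent D (sig i) U}

/-- Temporal condition (1) of uniformity. -/
def UniformT (cst : C → U) (M : ACMAS D sig Ag) : Prop :=
  ∀ s ∈ M.S, ∀ t ∈ M.S, ∀ s' ∈ M.S, ∀ (t' : GState D n U) (a : JAct sig U),
    t ∈ M.τ s a →
    ∀ ι : U → U, IsWitness cst cst ι (oplusG s t) (oplusG s' t') →
    ∀ ι' : U → U,
      (∀ u ∈ adomF (oplusG s t) ∪ Set.range cst, ι' u = ι u) →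
      Set.InjOn ι' (adomF (oplusG s t) ∪ Set.range cst ∪ actElems a) →
      (∀ c, ι' (cst c) = cst c) →
      t' ∈ M.τ s' (JAct.map ι' a)

/-- Epistemic condition (2) of uniformity. -/
def UniformE (cst : C → U) (M : ACMAS D sig Ag) : Prop :=
  ∀ s ∈ M.S, ∀ t ∈ M.S, ∀ s' ∈ M.S, ∀ (t' : GState D n U) (i : Fin n),
    M.Epi i.succ s t → Iso cst cst (oplusG s t) (oplusG s' t') →
    M.Epi i.succ s' t'

/-- Uniform AC-MAS. -/
def Uniform (cst : C → U) (M : ACMAS D sig Ag) : Prop :=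
  UniformT cst M ∧ UniformE cst M

/-- `b`-bounded AC-MAS: no reachable state has more than `b` distinct elements
in its active domain. -/
def BBounded (M : ACMAS D sig Ag) (b : ℕ) : Prop :=
  ∀ s ∈ M.S, (adomF s).Finite ∧ (adomF s).ncard ≤ b

end Uniform

/-- `N_Ag`: the sum over the agents of the maximal number of parameters of
their action types. -/
def NAg {n : ℕ} (sig : Fin (n+1) → AgentSig) : ℕ :=
  ∑ i, Finset.univ.sup (sig i).np

/-! ### Abstractions -/

section Abstraction

variable {D : Schema} {n : ℕ} {sig : Fin (n+1) → AgentSig} {C U U' : Type}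
  {Ag : ∀ i, Agent D (sig i) U} {Ag' : ∀ i, Agent D (sig i) U'}

/-- `A'` is the abstract agent corresponding to `A`, over the domain `U'`. -/
def IsAbstractAgent {g : AgentSig} (cst : C → U) (cst' : C → U')
    (A : Agent D g U) (A' : Agent D g U') : Prop :=
  ∀ (l' : Inst D U') (α' : GAct g U'), α' ∈ A'.Pr l' ↔
    ∃ l ∈ A.L, ∃ α ∈ A.Pr l, ∃ ι : U → U',
      IsWitness cst cst' ι (fun _ : PUnit => l) (fun _ : PUnit => l') ∧
      ∃ ι' : U → U',
        (∀ u ∈ l.adom ∪ Set.range cst, ι' u = ι u) ∧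
        Set.InjOn ι' (l.adom ∪ Set.range cst ∪ Set.range α.2) ∧
        α' = α.map ι'

/-- `M'` is an abstraction of `M` (over the abstract agents `Ag'`). -/
def IsAbstraction (cst : C → U) (cst' : C → U')
    (M : ACMAS D sig Ag) (M' : ACMAS D sig Ag') : Prop :=
  (∀ i, IsAbstractAgent cst cst' (Ag i) (Ag' i)) ∧
  Iso cst' cst M'.s0 M.s0 ∧
  ∀ (s' t' : GState D n U') (a' : JAct sig U'),
    t' ∈ M'.τ s' a' ↔
      ∃ s ∈ M.S, ∃ t ∈ M.S, ∃ a : JAct sig U, t ∈ M.τ s a ∧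
        ∃ ι : U → U', IsWitness cst cst' ι s s' ∧ IsWitness cst cst' ι t t' ∧
          ∃ ι' : U → U',
            (∀ u ∈ adomF s ∪ adomF t ∪ Set.range cst, ι' u = ι u) ∧
            Set.InjOn ι' (adomF s ∪ adomF t ∪ Set.range cst ∪ actElems a) ∧
            a' = JAct.map ι' a

/-- `M'` is a ⊕-abstraction of `M` (over the abstract agents `Ag'`).
The requirement `s0' = s0` is rendered, across the two interpretation
domains, as: the initial states are isomorphic and `adom(s0) ⊆ C`. -/
def IsOAbstraction (cst : C → U) (cst' : C → U')
    (M : ACMAS D sig Ag) (M' : ACMAS D sig Ag') : Prop :=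
  (∀ i, IsAbstractAgent cst cst' (Ag i) (Ag' i)) ∧
  (Iso cst cst' M.s0 M'.s0 ∧ adomF M.s0 ⊆ Set.range cst) ∧
  ∀ (s' t' : GState D n U') (a' : JAct sig U'),
    t' ∈ M'.τ s' a' ↔
      ∃ s ∈ M.S, ∃ t ∈ M.S, ∃ a : JAct sig U, t ∈ M.τ s a ∧
        ∃ ι : U → U',
          IsWitness cst cst' ι (oplusG s t) (oplusG s' t') ∧
          ∃ ι' : U → U',
            (∀ u ∈ adomF (oplusG s t) ∪ Set.range cst, ι' u = ι u) ∧
            Set.InjOn ι' (adomF (oplusG s t) ∪ Set.range cst ∪ actElems a) ∧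
            a' = JAct.map ι' a

end Abstraction

/-! ### Temporal-epistemic specification languages -/

/-- Sentence-atomic FO-CTL formulas. -/
inductive SAFOCTL (D : Schema) (C : Type) : Type where
  | atom : (ψ : FO D C) → ψ.free = ∅ → SAFOCTL D C
  | not : SAFOCTL D C → SAFOCTL D C
  | imp : SAFOCTL D C → SAFOCTL D C → SAFOCTL D C
  | ax : SAFOCTL D C → SAFOCTL D C
  | au : SAFOCTL D C → SAFOCTL D C → SAFOCTL D C
  | eu : SAFOCTL D C → SAFOCTL D C → SAFOCTL D C

/-- Satisfaction of SA-FO-CTL formulas at a global state. -/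
def SAFOCTL.sat {D : Schema} {C : Type} {n : ℕ} {sig : Fin (n+1) → AgentSig}
    {U : Type} {Ag : ∀ i, Agent D (sig i) U}
    (cst : C → U) (M : ACMAS D sig Ag) :
    SAFOCTL D C → GState D n U → Prop
  | .atom ψ _, s => ∀ σ, FO.sat cst (gInst s) σ ψ
  | .not φ, s => ¬ SAFOCTL.sat cst M φ s
  | .imp φ ψ, s => SAFOCTL.sat cst M φ s → SAFOCTL.sat cst M ψ s
  | .ax φ, s => ∀ r, M.IsRun r → r 0 = s → SAFOCTL.sat cst M φ (r 1)
  | .au φ ψ, s => ∀ r, M.IsRun r → r 0 = s →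
      ∃ k, SAFOCTL.sat cst M ψ (r k) ∧ ∀ j < k, SAFOCTL.sat cst M φ (r j)
  | .eu φ ψ, s => ∃ r, M.IsRun r ∧ r 0 = s ∧
      ∃ k, SAFOCTL.sat cst M ψ (r k) ∧ ∀ j < k, SAFOCTL.sat cst M φ (r j)

/-- `P ⊨ φ` for SA-FO-CTL. -/
def SAFOCTL.satM {D : Schema} {C : Type} {n : ℕ} {sig : Fin (n+1) → AgentSig}
    {U : Type} {Ag : ∀ i, Agent D (sig i) U}
    (cst : C → U) (M : ACMAS D sig Ag) (φ : SAFOCTL D C) : Prop :=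
  SAFOCTL.sat cst M φ M.s0

/-- FO-CTLK formulas, with epistemic operators for agents `1, …, n` and
common knowledge. -/
inductive FOCTLK (D : Schema) (C : Type) (n : ℕ) : Type where
  | atom : FO D C → FOCTLK D C n
  | not : FOCTLK D C n → FOCTLK D C n
  | imp : FOCTLK D C n → FOCTLK D C n → FOCTLK D C n
  | all : ℕ → FOCTLK D C n → FOCTLK D C n
  | ax : FOCTLK D C n → FOCTLK D C n
  | au : FOCTLK D C n → FOCTLK D C n → FOCTLK D C n
  | eu : FOCTLK D C n → FOCTLK D C n → FOCTLK D C n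
  | know : Fin n → FOCTLK D C n → FOCTLK D C n
  | ck : FOCTLK D C n → FOCTLK D C n

namespace FOCTLK

variable {D : Schema} {C : Type} {n : ℕ}

def free : FOCTLK D C n → Finset ℕ
  | .atom ψ => ψ.free
  | .not φ => φ.free
  | .imp φ ψ => φ.free ∪ ψ.free
  | .all x φ => φ.free.erase x
  | .ax φ => φ.free
  | .au φ ψ => φ.free ∪ ψ.free
  | .eu φ ψ => φ.free ∪ ψ.free
  | .know _ φ => φ.free
  | .ck φ => φ.free

def vars : FOCTLK D C n → Finset ℕ
  | .atom ψ => ψ.vars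
  | .not φ => φ.vars
  | .imp φ ψ => φ.vars ∪ ψ.vars
  | .all x φ => insert x φ.vars
  | .ax φ => φ.vars
  | .au φ ψ => φ.vars ∪ ψ.vars
  | .eu φ ψ => φ.vars ∪ ψ.vars
  | .know _ φ => φ.vars
  | .ck φ => φ.vars

/-- Satisfaction `(P, s, σ) ⊨ φ` of FO-CTLK formulas. -/
def sat {sig : Fin (n+1) → AgentSig} {U : Type} {Ag : ∀ i, Agent D (sig i) U}
    (cst : C → U) (M : ACMAS D sig Ag) :
    FOCTLK D C n → GState D n U → (ℕ → U) → Prop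
  | .atom ψ, s, σ => FO.sat cst (gInst s) σ ψ
  | .not φ, s, σ => ¬ sat cst M φ s σ
  | .imp φ ψ, s, σ => sat cst M φ s σ → sat cst M ψ s σ
  | .all x φ, s, σ => ∀ u ∈ adomF s, sat cst M φ s (Function.update σ x u)
  | .ax φ, s, σ => ∀ r, M.IsRun r → r 0 = s → sat cst M φ (r 1) σ
  | .au φ ψ, s, σ => ∀ r, M.IsRun r → r 0 = s →
      ∃ k, sat cst M ψ (r k) σ ∧ ∀ j < k, sat cst M φ (r j) σ
  | .eu φ ψ, s, σ => ∃ r, M.IsRun r ∧ r 0 = s ∧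
      ∃ k, sat cst M ψ (r k) σ ∧ ∀ j < k, sat cst M φ (r j) σ
  | .know i φ, s, σ => ∀ t, M.Epi i.succ s t → sat cst M φ t σ
  | .ck φ, s, σ => ∀ t, Relation.TransGen M.EpiAny s t → sat cst M φ t σ

/-- `P ⊨ φ` for FO-CTLK: satisfaction at the initial state under every
assignment. -/
def satM {sig : Fin (n+1) → AgentSig} {U : Type} {Ag : ∀ i, Agent D (sig i) U}
    (cst : C → U) (M : ACMAS D sig Ag) (φ : FOCTLK D C n) : Prop :=
  ∀ σ : ℕ → U, sat cst M φ M.s0 σ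

end FOCTLK

/-- FO-ECTLK: the existential fragment. -/
inductive FOECTLK (D : Schema) (C : Type) (n : ℕ) : Type where
  | atom : FO D C → FOECTLK D C n
  | and : FOECTLK D C n → FOECTLK D C n → FOECTLK D C n
  | or : FOECTLK D C n → FOECTLK D C n → FOECTLK D C n
  | all : ℕ → FOECTLK D C n → FOECTLK D C n
  | ex : ℕ → FOECTLK D C n → FOECTLK D C n
  | enext : FOECTLK D C n → FOECTLK D C n
  | eu : FOECTLK D C n → FOECTLK D C n → FOECTLK D C n
  | dknow : Fin n → FOECTLK D C n → FOECTLK D C n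
  | dck : FOECTLK D C n → FOECTLK D C n

/-- Satisfaction of FO-ECTLK formulas. -/
def FOECTLK.sat {D : Schema} {C : Type} {n : ℕ} {sig : Fin (n+1) → AgentSig}
    {U : Type} {Ag : ∀ i, Agent D (sig i) U}
    (cst : C → U) (M : ACMAS D sig Ag) :
    FOECTLK D C n → GState D n U → (ℕ → U) → Prop
  | .atom ψ, s, σ => FO.sat cst (gInst s) σ ψ
  | .and φ ψ, s, σ => FOECTLK.sat cst M φ s σ ∧ FOECTLK.sat cst M ψ s σ
  | .or φ ψ, s, σ => FOECTLK.sat cst M φ s σ ∨ FOECTLK.sat cst M ψ s σ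
  | .all x φ, s, σ => ∀ u ∈ adomF s, FOECTLK.sat cst M φ s (Function.update σ x u)
  | .ex x φ, s, σ => ∃ u ∈ adomF s, FOECTLK.sat cst M φ s (Function.update σ x u)
  | .enext φ, s, σ => ∃ r, M.IsRun r ∧ r 0 = s ∧ FOECTLK.sat cst M φ (r 1) σ
  | .eu φ ψ, s, σ => ∃ r, M.IsRun r ∧ r 0 = s ∧
      ∃ k, FOECTLK.sat cst M ψ (r k) σ ∧ ∀ j < k, FOECTLK.sat cst M φ (r j) σ
  | .dknow i φ, s, σ => ∃ t, M.Epi i.succ s t ∧ FOECTLK.sat cst M φ t σ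
  | .dck φ, s, σ => ∃ t, Relation.TransGen M.EpiAny s t ∧ FOECTLK.sat cst M φ t σ

/-- `P ⊨ φ` for FO-ECTLK. -/
def FOECTLK.satM {D : Schema} {C : Type} {n : ℕ} {sig : Fin (n+1) → AgentSig}
    {U : Type} {Ag : ∀ i, Agent D (sig i) U}
    (cst : C → U) (M : ACMAS D sig Ag) (φ : FOECTLK D C n) : Prop :=
  ∀ σ : ℕ → U, FOECTLK.sat cst M φ M.s0 σ

/-- `Mb` is the `b`-restriction of `M`. -/
def IsBRestriction {D : Schema} {n : ℕ} {sig : Fin (n+1) → AgentSig} {U : Type}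
    {Ag : ∀ i, Agent D (sig i) U} (Mb M : ACMAS D sig Ag) (b : ℕ) : Prop :=
  Mb.s0 = M.s0 ∧
  Mb.S = { s ∈ M.S | (adomF s).Finite ∧ (adomF s).ncard ≤ b } ∧
  ∀ s a, Mb.τ s a = { t ∈ M.τ s a | s ∈ Mb.S ∧ t ∈ Mb.S }

/-! ### Artifact-centric programs -/

/-- A declarative artifact-centric program. -/
structure ACProgram (D : Schema) (C : Type) {n : ℕ} (sig : Fin (n+1) → AgentSig) where
  /-- local database schemas, as sets of relation symbols -/
  locRel : Fin (n+1) → Set D.Rel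
  locDisj : ∀ i j, i ≠ j → Disjoint (locRel i) (locRel j)
  /-- initial local states; their values are constants -/
  l0 : ∀ _ : Fin (n+1), Inst D C
  l0_loc : ∀ i r, r ∉ locRel i → (l0 i).rel r = ∅
  /-- preconditions: FO-formulas over the local schema whose free variables
  are among the action parameters -/
  pre : ∀ i, (sig i).Act → FO D C
  /-- postconditions: FO-formulas over the global schema and its primed copy -/
  post : ∀ i, (sig i).Act → FO D.double C
  pre_free : ∀ i a, ↑(pre i a).free ⊆ { x : ℕ | x < (sig i).np a }
  post_free : ∀ i a, ↑(post i a).free ⊆ { x : ℕ | x < (sig i).np a }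
  pre_loc : ∀ i a, (pre i a).UsesOnly (locRel i)

namespace ACProgram

variable {D : Schema} {C : Type} {n : ℕ} {sig : Fin (n+1) → AgentSig}

/-- The constants mentioned in the program. -/
def progConsts (P : ACProgram D C sig) : Set C :=
  (⋃ i, (P.l0 i).adom) ∪
  ⋃ i, ⋃ a : (sig i).Act, ((P.pre i a).consts ∪ (P.post i a).consts)

/-- Ground values of the postcondition parameters of a joint ground action. -/
def postElems (P : ACProgram D C sig) {U : Type} (a : JAct sig U) : Set U :=
  { u | ∃ (i : Fin (n+1)) (j : Fin ((sig i).np (a i).1)),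
      (j : ℕ) ∈ (P.post i (a i).1).free ∧ (a i).2 j = u }

/-- The agent induced by the program for index `i`. -/
def InducedAgent {U : Type} (cst : C → U) (P : ACProgram D C sig) (i : Fin (n+1))
    (A : Agent D (sig i) U) : Prop :=
  A.L = { l : Inst D U | ∀ r, r ∉ P.locRel i → l.rel r = ∅ } ∧
  ∀ (l : Inst D U) (α : GAct (sig i) U), α ∈ A.Pr l ↔
    ∀ σ : ℕ → U, (∀ j : Fin ((sig i).np α.1), σ (j : ℕ) = α.2 j) →
      FO.sat cst l σ (P.pre i α.1)

/-- The transitions induced by the program. -/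
def InducedTrans {U : Type} (cst : C → U) (P : ACProgram D C sig)
    (s t : GState D n U) (a : JAct sig U) : Prop :=
  (∀ i, ∀ σ : ℕ → U, (∀ j : Fin ((sig i).np (a i).1), σ (j : ℕ) = (a i).2 j) →
      FO.sat cst (s i) σ (P.pre i (a i).1)) ∧
  adomF t ⊆ adomF s ∪ P.postElems a ∪ cst '' (⋃ i, (P.post i (a i).1).consts) ∧
  (∀ i, ∀ σ : ℕ → U, (∀ j : Fin ((sig i).np (a i).1), σ (j : ℕ) = (a i).2 j) →
      FO.sat cst ((gInst s).oplus (gInst t)) σ (P.post i (a i).1))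

/-- `M` is the AC-MAS induced by the program `P` (the transition relation is
assumed to be serial). -/
def InducedACMAS {U : Type} (cst : C → U) (P : ACProgram D C sig)
    (Ag : ∀ i, Agent D (sig i) U) (M : ACMAS D sig Ag) : Prop :=
  (∀ i, P.InducedAgent cst i (Ag i)) ∧
  M.s0 = (fun i => (P.l0 i).map cst) ∧
  (∀ s t a, t ∈ M.τ s a ↔ P.InducedTrans cst s t a) ∧
  M.Std

end ACProgram

/-! Isomorphic reachable states of the two systems are ⊕-bisimilar. An isomorphism is a
constant-preserving map injective on the active domain, and such a map extends to any further
finite set of elements: into `U` because `U` is infinite, into `U'` as long as the set has at most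
`2b + |C| + N_Ag` elements, which bounds the two states and the action parameters of a transition
of the `b`-bounded system `P`. Along such maps the abstraction carries transitions of `P` to `P'`,
and uniformity carries transitions of `P'`, which are isomorphic copies of transitions of `P`,
back to `P`. By induction on reachability, every isomorphic copy of a reachable state is then
reachable in the other system, which yields the epistemic clauses. -/

open Cardinal

attribute [ext] Inst

namespace Inst

variable {D : Schema} {U V W : Type}

lemma mem_adom {I : Inst D U} {r : D.Rel} {t : Fin (D.arity r) → U} (ht : t ∈ I.rel r)
    (j : Fin (D.arity r)) : t j ∈ I.adom :=
  ⟨r, t, ht, j, rfl⟩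

lemma adom_finite (I : Inst D U) : I.adom.Finite := by
  refine (finite_iUnion fun r => (I.finite r).biUnion fun t _ => finite_range t).subset ?_
  rintro _ ⟨r, t, ht, j, rfl⟩
  exact mem_iUnion.2 ⟨r, mem_iUnion₂.2 ⟨t, ht, j, rfl⟩⟩

lemma adom_map (g : U → V) (I : Inst D U) : (I.map g).adom = g '' I.adom := by
  ext u
  constructor
  · rintro ⟨r, _, ⟨t, ht, rfl⟩, j, rfl⟩
    exact ⟨t j, mem_adom ht j, rfl⟩
  · rintro ⟨_, ⟨r, t, ht, j, rfl⟩, rfl⟩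
    exact ⟨r, g ∘ t, ⟨t, ht, rfl⟩, j, rfl⟩

lemma map_map (g : U → V) (g' : V → W) (I : Inst D U) :
    (I.map g).map g' = I.map (g' ∘ g) := by
  ext r
  simp only [Inst.map, image_image]
  rfl

lemma map_id (I : Inst D U) : I.map id = I := by
  ext r
  simp [Inst.map]

lemma map_congr {g g' : U → V} {I : Inst D U} (h : EqOn g g' I.adom) : I.map g = I.map g' := by
  ext r : 2
  exact image_congr fun t ht => funext fun j => h (mem_adom ht j)

lemma adom_oplus (I J : Inst D U) : (I.oplus J).adom = I.adom ∪ J.adom := by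
  ext u
  constructor
  · rintro ⟨r | r, t, ht, j, rfl⟩
    exacts [Or.inl ⟨r, t, ht, j, rfl⟩, Or.inr ⟨r, t, ht, j, rfl⟩]
  · rintro (⟨r, t, ht, j, rfl⟩ | ⟨r, t, ht, j, rfl⟩)
    exacts [⟨.inl r, t, ht, j, rfl⟩, ⟨.inr r, t, ht, j, rfl⟩]

end Inst

section Families

variable {D : Schema} {X U V W : Type}

def mapF (g : U → V) (s : X → Inst D U) : X → Inst D V := fun i => (s i).map g

lemma mem_adomF {s : X → Inst D U} {i : X} {r : D.Rel} {t : Fin (D.arity r) → U}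
    (ht : t ∈ (s i).rel r) (j : Fin (D.arity r)) : t j ∈ adomF s :=
  mem_iUnion.2 ⟨i, Inst.mem_adom ht j⟩

lemma adom_subset_adomF (s : X → Inst D U) (i : X) : (s i).adom ⊆ adomF s :=
  subset_iUnion (fun i => (s i).adom) i

lemma adomF_finite [Finite X] (s : X → Inst D U) : (adomF s).Finite :=
  finite_iUnion fun i => (s i).adom_finite

lemma adomF_mapF (g : U → V) (s : X → Inst D U) : adomF (mapF g s) = g '' adomF s := by
  simp only [adomF, mapF, Inst.adom_map, image_iUnion]

lemma mapF_mapF (g : U → V) (g' : V → W) (s : X → Inst D U) :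
    mapF g' (mapF g s) = mapF (g' ∘ g) s :=
  funext fun i => (s i).map_map g g'

lemma mapF_congr {g g' : U → V} {s : X → Inst D U} (h : EqOn g g' (adomF s)) :
    mapF g s = mapF g' s :=
  funext fun i => Inst.map_congr (h.mono (adom_subset_adomF s i))

lemma mapF_id (s : X → Inst D U) : mapF id s = s :=
  funext fun i => (s i).map_id

variable {n : ℕ}

lemma adomF_oplusG (s t : GState D n U) : adomF (oplusG s t) = adomF s ∪ adomF t := by
  simp only [adomF, oplusG, Inst.adom_oplus, iUnion_union_distrib]

lemma mapF_oplusG (g : U → V) (s t : GState D n U) :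
    mapF g (oplusG s t) = oplusG (mapF g s) (mapF g t) := by
  funext i
  ext (r | r) <;> rfl

lemma oplusG_inj {s t s' t' : GState D n U} :
    oplusG s t = oplusG s' t' ↔ s = s' ∧ t = t' := by
  refine ⟨fun h => ⟨funext fun i => ?_, funext fun i => ?_⟩, fun h => h.1 ▸ h.2 ▸ rfl⟩
  · ext r : 2
    exact congrArg (fun I => I.rel (.inl r)) (congrFun h i)
  · ext r : 2
    exact congrArg (fun I => I.rel (.inr r)) (congrFun h i)

end Families

lemma Set.InjOn.exists_extension {α β : Type} {f : α → β} {A B : Set α} (hf : InjOn f A)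
    (hAB : A ⊆ B) (hB : B.Finite) (hcard : #B ≤ #β) :
    ∃ g : α → β, EqOn g f A ∧ InjOn g B := by
  classical
  have hA : A.Finite := hB.subset hAB
  -- the new points of `B` are sent injectively outside `f '' A`, which has `#A` elements
  have hle : #(B \ A : Set α) ≤ #((f '' A)ᶜ : Set β) := by
    rw [← add_le_add_iff_of_lt_aleph0 hA.lt_aleph0, mk_sdiff_add_mk hAB,
      ← mk_image_eq_of_injOn f A hf, add_comm, mk_sum_compl]
    exact hcard
  obtain ⟨e⟩ := hle
  refine ⟨fun u => if h : u ∈ B \ A then e ⟨u, h⟩ else f u,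
    fun u hu => dif_neg (notMem_sdiff_of_mem hu),
    InjOn.mono (union_sdiff_cancel hAB).ge ((injOn_union disjoint_sdiff_right).2 ⟨?_, ?_, ?_⟩)⟩
  · intro x hx y hy hxy
    simp only [dif_neg (notMem_sdiff_of_mem hx), dif_neg (notMem_sdiff_of_mem hy)] at hxy
    exact hf hx hy hxy
  · intro x hx y hy hxy
    simp only [dif_pos hx, dif_pos hy] at hxy
    exact congrArg Subtype.val (e.injective (Subtype.ext hxy))
  · intro x hx y hy hxy
    simp only [dif_neg (notMem_sdiff_of_mem hx), dif_pos hy] at hxy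
    exact (e ⟨y, hy⟩).2 ⟨x, hx, hxy⟩

section

variable {C U V W : Type} {cstU : C → U} {cstV : C → V} {cstW : C → W}
  {g : U → V} {A B : Set U}

def ConstInjOn (cstU : C → U) (cstV : C → V) (g : U → V) (A : Set U) : Prop :=
  InjOn g (A ∪ range cstU) ∧ ∀ c, g (cstU c) = cstV c

namespace ConstInjOn

lemma mono (h : ConstInjOn cstU cstV g B) (hAB : A ⊆ B) : ConstInjOn cstU cstV g A :=
  ⟨h.1.mono (union_subset_union_left _ hAB), h.2⟩

lemma image_union_range (h : ConstInjOn cstU cstV g A) :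
    g '' (A ∪ range cstU) = g '' A ∪ range cstV := by
  rw [image_union, ← range_comp, show g ∘ cstU = cstV from funext h.2]

lemma comp {g' : V → W} {B : Set V} (hg : ConstInjOn cstU cstV g A)
    (hg' : ConstInjOn cstV cstW g' B) (hAB : g '' A ⊆ B) : ConstInjOn cstU cstW (g' ∘ g) A := by
  refine ⟨hg'.1.comp hg.1 ?_, fun c => by simp only [Function.comp_apply, hg.2, hg'.2]⟩
  rintro u (hu | ⟨c, rfl⟩)
  exacts [Or.inl (hAB ⟨u, hu, rfl⟩), Or.inr ⟨c, (hg.2 c).symm⟩]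

lemma exists_leftInvOn [Nonempty U] (h : ConstInjOn cstU cstV g A) :
    ∃ κ : V → U, LeftInvOn κ g (A ∪ range cstU) ∧ ConstInjOn cstV cstU κ (g '' A) := by
  have hκ := h.1.leftInvOn_invFunOn
  refine ⟨_, hκ, ?_, fun c => ?_⟩
  · rw [← h.image_union_range]
    exact hκ.rightInvOn_image.injOn
  · rw [← h.2 c]
    exact hκ (Or.inr ⟨c, rfl⟩)

lemma exists_extension [Finite C] (h : ConstInjOn cstU cstV g A) (hAB : A ⊆ B) (hB : B.Finite)
    (hcard : #(B ∪ range cstU : Set U) ≤ #V) :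
    ∃ g', ConstInjOn cstU cstV g' B ∧ EqOn g' g A := by
  obtain ⟨g', hg'A, hg'B⟩ := h.1.exists_extension (union_subset_union_left _ hAB)
    (hB.union (finite_range cstU)) hcard
  exact ⟨g', ⟨hg'B, fun c => (hg'A (Or.inr ⟨c, rfl⟩)).trans (h.2 c)⟩,
    hg'A.mono subset_union_left⟩

lemma exists_extension_of_infinite [Finite C] [Infinite V] (h : ConstInjOn cstU cstV g A)
    (hAB : A ⊆ B) (hB : B.Finite) : ∃ g', ConstInjOn cstU cstV g' B ∧ EqOn g' g A :=
  h.exists_extension hAB hB ((hB.union (finite_range cstU)).lt_aleph0.le.trans (aleph0_le_mk V))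

end ConstInjOn

end

section Iso

variable {D : Schema} {X C U V : Type} {cstU : C → U} {cstV : C → V}
  {s : X → Inst D U} {s' : X → Inst D V}

lemma isWitness_mapF {g : U → V} (h : ConstInjOn cstU cstV g (adomF s)) :
    IsWitness cstU cstV g s (mapF g s) := by
  refine ⟨?_, h.2, fun i r t ht => ⟨fun hm => ⟨t, hm, rfl⟩, ?_⟩⟩
  · rw [adomF_mapF, ← h.image_union_range]
    exact h.1.bijOn_image
  · rintro ⟨t₂, ht₂, heq⟩
    obtain rfl : t₂ = t :=
      funext fun j => h.1 (Or.inl (mem_adomF ht₂ j)) (ht j) (congrFun heq j)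
    exact ht₂

lemma IsWitness.eq_mapF {ι : U → V} (h : IsWitness cstU cstV ι s s') : s' = mapF ι s := by
  obtain ⟨hbij, -, hrel⟩ := h
  funext i
  ext r t' : 3
  constructor
  · intro ht'
    choose u hu hιu using fun j => hbij.surjOn (Or.inl (mem_adomF ht' j))
    obtain rfl : (fun j => ι (u j)) = t' := funext hιu
    exact ⟨u, (hrel i r u hu).2 ht', rfl⟩
  · rintro ⟨t, ht, rfl⟩
    exact (hrel i r t fun j => Or.inl (mem_adomF ht j)).1 ht

lemma iso_iff : Iso cstU cstV s s' ↔ ∃ g, ConstInjOn cstU cstV g (adomF s) ∧ s' = mapF g s :=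
  ⟨fun ⟨ι, h⟩ => ⟨ι, ⟨h.1.injOn, h.2.1⟩, h.eq_mapF⟩,
    fun ⟨g, hg, h⟩ => ⟨g, h ▸ isWitness_mapF hg⟩⟩

lemma Iso.symm [Nonempty U] (h : Iso cstU cstV s s') : Iso cstV cstU s' s := by
  obtain ⟨g, hg, rfl⟩ := iso_iff.1 h
  obtain ⟨κ, hκ, hκg⟩ := hg.exists_leftInvOn
  refine iso_iff.2 ⟨κ, adomF_mapF g s ▸ hκg, ?_⟩
  rw [mapF_mapF, mapF_congr (g := κ ∘ g) (g' := id) fun u hu => hκ (Or.inl hu), mapF_id]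

lemma iso_comm [Nonempty U] [Nonempty V] : Iso cstU cstV s s' ↔ Iso cstV cstU s' s :=
  ⟨Iso.symm, Iso.symm⟩

lemma Iso.adomF_subset_range (h : Iso cstU cstV s s') (hs : adomF s ⊆ range cstU) :
    adomF s' ⊆ range cstV := by
  obtain ⟨g, hg, rfl⟩ := iso_iff.1 h
  rw [adomF_mapF]
  rintro _ ⟨u, hu, rfl⟩
  obtain ⟨c, rfl⟩ := hs hu
  exact ⟨c, (hg.2 c).symm⟩

lemma iso_oplusG_iff {n : ℕ} {s t : GState D n U} {s' t' : GState D n V} :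
    Iso cstU cstV (oplusG s t) (oplusG s' t') ↔
      ∃ g, ConstInjOn cstU cstV g (adomF s ∪ adomF t) ∧ s' = mapF g s ∧ t' = mapF g t := by
  simp only [iso_iff, adomF_oplusG, mapF_oplusG, oplusG_inj]

end Iso

lemma ACMAS.mem_S_of_tr {D : Schema} {n : ℕ} {sig : Fin (n+1) → AgentSig} {U : Type}
    {Ag : ∀ i, Agent D (sig i) U} (M : ACMAS D sig Ag) {s t : GState D n U} (hs : s ∈ M.S)
    (h : M.Tr s t) : t ∈ M.S :=
  h.elim fun a ha => M.tau_closed s hs a ha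

section Transfer

variable {D : Schema} {n : ℕ} {C U₁ U₂ : Type} {sig₁ sig₂ : Fin (n+1) → AgentSig}
  {Ag₁ : ∀ i, Agent D (sig₁ i) U₁} {Ag₂ : ∀ i, Agent D (sig₂ i) U₂}
  {cst₁ : C → U₁} {cst₂ : C → U₂} {M₁ : ACMAS D sig₁ Ag₁} {M₂ : ACMAS D sig₂ Ag₂}

def InjExtendable (cst₁ : C → U₁) (cst₂ : C → U₂) (M₁ : ACMAS D sig₁ Ag₁) : Prop :=
  ∀ s ∈ M₁.S, ∀ t ∈ M₁.S, ∀ g : U₁ → U₂, ConstInjOn cst₁ cst₂ g (adomF s) →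
    ∃ g', ConstInjOn cst₁ cst₂ g' (adomF s ∪ adomF t) ∧ mapF g' s = mapF g s

def TrTransfer (cst₁ : C → U₁) (cst₂ : C → U₂) (M₁ : ACMAS D sig₁ Ag₁)
    (M₂ : ACMAS D sig₂ Ag₂) : Prop :=
  ∀ s ∈ M₁.S, ∀ t, M₁.Tr s t → ∀ g : U₁ → U₂, ConstInjOn cst₁ cst₂ g (adomF s ∪ adomF t) →
    mapF g s ∈ M₂.S → M₂.Tr (mapF g s) (mapF g t)

lemma mapF_mem_of_mem (hM₁ : M₁.Std) (hext : InjExtendable cst₁ cst₂ M₁)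
    (hstep : TrTransfer cst₁ cst₂ M₁ M₂) (h0 : Iso cst₁ cst₂ M₁.s0 M₂.s0)
    (h0C : adomF M₁.s0 ⊆ range cst₁) {t : GState D n U₁} (ht : t ∈ M₁.S) :
    ∀ g, ConstInjOn cst₁ cst₂ g (adomF t) → mapF g t ∈ M₂.S := by
  rw [hM₁.2] at ht
  induction ht with
  | refl =>
    intro g hg
    obtain ⟨ι, hι, hs0⟩ := iso_iff.1 h0
    rw [mapF_congr (g' := ι) fun u hu => ?_, ← hs0]
    · exact M₂.s0_mem
    · obtain ⟨c, rfl⟩ := h0C hu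
      rw [hg.2, hι.2]
  | @tail s t hreach hst ih =>
    intro g hg
    have hs : s ∈ M₁.S := hM₁.2 ▸ hreach
    obtain ⟨g', hg', hg't⟩ := hext t (M₁.mem_S_of_tr hs hst) s hs g hg
    rw [union_comm] at hg'
    have hs' := ih g' (hg'.mono subset_union_left)
    exact hg't ▸ M₂.mem_S_of_tr hs' (hstep s hs t hst g' hg' hs')

theorem isOSim_of_trTransfer (hM₁ : M₁.Std) (hext : InjExtendable cst₁ cst₂ M₁)
    (hstep : TrTransfer cst₁ cst₂ M₁ M₂) (h0 : Iso cst₁ cst₂ M₁.s0 M₂.s0)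
    (h0C : adomF M₁.s0 ⊆ range cst₁) :
    IsOSim cst₁ cst₂ M₁ M₂ fun s s' => s ∈ M₁.S ∧ s' ∈ M₂.S ∧ Iso cst₁ cst₂ s s' := by
  rintro s _ ⟨hs, hs', hiso⟩
  obtain ⟨g, hg, rfl⟩ := iso_iff.1 hiso
  refine ⟨hs, hs', hiso, fun t hst => ?_, fun t i ⟨_, ht, hi⟩ => ?_⟩
  · obtain ⟨g', hg', hg's⟩ := hext s hs t (M₁.mem_S_of_tr hs hst) g hg
    have hst' := hg's ▸ hstep s hs t hst g' hg' (hg's ▸ hs')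
    exact ⟨_, hst', hg's ▸ iso_oplusG_iff.2 ⟨g', hg', rfl, rfl⟩, M₁.mem_S_of_tr hs hst,
      M₂.mem_S_of_tr hs' hst', iso_iff.2 ⟨g', hg'.mono subset_union_right, rfl⟩⟩
  · obtain ⟨g', hg', hg's⟩ := hext s hs t ht g hg
    have ht' := mapF_mem_of_mem hM₁ hext hstep h0 h0C ht g' (hg'.mono subset_union_right)
    refine ⟨mapF g' t, ⟨hs', ht', ?_⟩, hg's ▸ iso_oplusG_iff.2 ⟨g', hg', rfl, rfl⟩, ht, ht',
      iso_iff.2 ⟨g', hg'.mono subset_union_right, rfl⟩⟩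
    rw [← hg's]
    exact congrArg (Inst.map g') hi

lemma injExtendable_of_infinite [Finite C] [Infinite U₂] : InjExtendable cst₁ cst₂ M₁ := by
  intro s _ t _ g hg
  obtain ⟨g', hg', hEq⟩ := hg.exists_extension_of_infinite (B := adomF s ∪ adomF t)
    subset_union_left ((adomF_finite s).union (adomF_finite t))
  exact ⟨g', hg', mapF_congr hEq⟩

end Transfer

lemma Set.ncard_range_le {α β : Type} [Finite α] (f : α → β) : (range f).ncard ≤ Nat.card α := by
  rw [← Nat.card_coe_set_eq]
  exact Finite.card_range_le f

section ActElems

variable {n : ℕ} {sig : Fin (n+1) → AgentSig} {U V : Type}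

lemma actElems_eq_iUnion (a : JAct sig U) : actElems a = ⋃ i, range (a i).2 := by
  ext u
  simp only [actElems, mem_ofPred_eq, mem_iUnion, mem_range]

lemma actElems_finite (a : JAct sig U) : (actElems a).Finite := by
  rw [actElems_eq_iUnion]
  exact finite_iUnion fun i => finite_range _

lemma ncard_actElems_le (a : JAct sig U) : (actElems a).ncard ≤ NAg sig := by
  rw [actElems_eq_iUnion]
  refine (ncard_iUnion_le_of_fintype _).trans (Finset.sum_le_sum fun i _ => ?_)
  calc (range (a i).2).ncard ≤ Nat.card (Fin ((sig i).np (a i).1)) := ncard_range_le _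
    _ = (sig i).np (a i).1 := Nat.card_fin _
    _ ≤ Finset.univ.sup (sig i).np := Finset.le_sup (Finset.mem_univ _)

end ActElems

section Abstraction

variable {D : Schema} {C : Type} {n : ℕ} {sig : Fin (n+1) → AgentSig} {U U' : Type}
  {cst : C → U} {cst' : C → U'} {Ag : ∀ i, Agent D (sig i) U} {Ag' : ∀ i, Agent D (sig i) U'}
  {M : ACMAS D sig Ag} {M' : ACMAS D sig Ag'} {s t : GState D n U} {a : JAct sig U}

lemma BBounded.mk_union_le [Finite C] {b : ℕ} (hb : BBounded M b)
    (hcard : ((2 * b + Nat.card C + NAg sig : ℕ) : Cardinal) ≤ #U') (hs : s ∈ M.S)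
    (ht : t ∈ M.S) {E : Set U} (hE : E.Finite) (hEn : E.ncard ≤ NAg sig) :
    #(adomF s ∪ adomF t ∪ E ∪ range cst : Set U) ≤ #U' := by
  rw [← cast_ncard ((((adomF_finite s).union (adomF_finite t)).union hE).union (finite_range cst))]
  refine le_trans (Nat.cast_le.2 ?_) hcard
  have := (hb s hs).2
  have := (hb t ht).2
  have := ncard_range_le cst
  have := ncard_union_le (adomF s ∪ adomF t ∪ E) (range cst)
  have := ncard_union_le (adomF s ∪ adomF t) E
  have := ncard_union_le (adomF s) (adomF t)
  omega

lemma IsOAbstraction.mapF_mem_tau (habs : IsOAbstraction cst cst' M M') (hs : s ∈ M.S)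
    (ht : t ∈ M.S) (hst : t ∈ M.τ s a) {g : U → U'}
    (hg : ConstInjOn cst cst' g (adomF s ∪ adomF t ∪ actElems a)) :
    mapF g t ∈ M'.τ (mapF g s) (JAct.map g a) := by
  refine (habs.2.2 _ _ _).2 ⟨s, hs, t, ht, a, hst, g, ?_, g, fun _ _ => rfl, ?_, rfl⟩
  · rw [← mapF_oplusG]
    exact isWitness_mapF (hg.mono (by rw [adomF_oplusG]; exact subset_union_left))
  · rw [adomF_oplusG, union_right_comm]
    exact hg.1

lemma IsOAbstraction.exists_of_mem_tau (habs : IsOAbstraction cst cst' M M')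
    {s' t' : GState D n U'} {a' : JAct sig U'} (h : t' ∈ M'.τ s' a') :
    ∃ s ∈ M.S, ∃ t ∈ M.S, ∃ a, t ∈ M.τ s a ∧ Iso cst cst' (oplusG s t) (oplusG s' t') := by
  obtain ⟨s, hs, t, ht, a, hst, ι, hι, -⟩ := (habs.2.2 _ _ _).1 h
  exact ⟨s, hs, t, ht, a, hst, ι, hι⟩

lemma UniformT.mapF_mem_tau (hu : UniformT cst M) (hs : s ∈ M.S) (ht : t ∈ M.S)
    (hst : t ∈ M.τ s a) {g : U → U} (hg : ConstInjOn cst cst g (adomF s ∪ adomF t ∪ actElems a))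
    (hgs : mapF g s ∈ M.S) : mapF g t ∈ M.τ (mapF g s) (JAct.map g a) := by
  refine hu s hs t ht _ hgs _ a hst g ?_ g (fun _ _ => rfl) ?_ hg.2
  · rw [← mapF_oplusG]
    exact isWitness_mapF (hg.mono (by rw [adomF_oplusG]; exact subset_union_left))
  · rw [adomF_oplusG, union_right_comm]
    exact hg.1

lemma trTransfer_of_bBounded [Finite C] {b : ℕ} (hb : BBounded M b)
    (hcard : ((2 * b + Nat.card C + NAg sig : ℕ) : Cardinal) ≤ #U')
    (habs : IsOAbstraction cst cst' M M') : TrTransfer cst cst' M M' := by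
  rintro s hs t ⟨a, hst⟩ g hg -
  have ht := M.tau_closed s hs a hst
  obtain ⟨g', hg', hEq⟩ := hg.exists_extension subset_union_left
    (((adomF_finite s).union (adomF_finite t)).union (actElems_finite a))
    (hb.mk_union_le hcard hs ht (actElems_finite a) (ncard_actElems_le a))
  rw [← mapF_congr (hEq.mono subset_union_left), ← mapF_congr (hEq.mono subset_union_right)]
  exact ⟨_, habs.mapF_mem_tau hs ht hst hg'⟩

lemma injExtendable_of_bBounded [Finite C] {b : ℕ} (hb : BBounded M b)
    (hcard : ((2 * b + Nat.card C + NAg sig : ℕ) : Cardinal) ≤ #U') :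
    InjExtendable cst cst' M := by
  intro s hs t ht g hg
  obtain ⟨g', hg', hEq⟩ := hg.exists_extension (subset_union_left.trans subset_union_left)
    (((adomF_finite s).union (adomF_finite t)).union finite_empty)
    (hb.mk_union_le hcard hs ht finite_empty (by simp))
  exact ⟨g', hg'.mono subset_union_left, mapF_congr hEq⟩

lemma trTransfer_symm_of_uniformT [Finite C] [Infinite U] (hu : UniformT cst M)
    (habs : IsOAbstraction cst cst' M M') : TrTransfer cst' cst M' M := by
  rintro s' - t' ⟨a', hst'⟩ h hh hs
  obtain ⟨s, hsS, t, htS, a, hst, hiso⟩ := habs.exists_of_mem_tau hst'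
  obtain ⟨ι, hι, rfl, rfl⟩ := iso_oplusG_iff.1 hiso
  have hhι := hι.comp hh (by rw [adomF_mapF, adomF_mapF, image_union])
  obtain ⟨f, hf, hEq⟩ := hhι.exists_extension_of_infinite subset_union_left
    (((adomF_finite s).union (adomF_finite t)).union (actElems_finite a))
  rw [mapF_mapF, ← mapF_congr (hEq.mono subset_union_left)] at hs ⊢
  rw [mapF_mapF, ← mapF_congr (hEq.mono subset_union_right)]
  exact ⟨_, hu.mapF_mem_tau hsS htS hst hf hs⟩

end Abstraction

theorem statement13_general
    {D : Schema} {C : Type} [Fintype C] {n : ℕ}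
    {sig : Fin (n+1) → AgentSig} {U U' : Type} [Infinite U]
    (cst : C → U) (cst' : C → U')
    {Ag : ∀ i, Agent D (sig i) U} {Ag' : ∀ i, Agent D (sig i) U'}
    (M : ACMAS D sig Ag) (M' : ACMAS D sig Ag')
    (hM : M.Std) (hM' : M'.Std)
    (hu : Uniform cst M)
    (b : ℕ) (hb : BBounded M b)
    (h0 : adomF M.s0 ⊆ Set.range cst)
    (hcard : ((2*b + Nat.card C + NAg sig : ℕ) : Cardinal) ≤ Cardinal.mk U')
    (habs : IsOAbstraction cst cst' M M') :
    OBisimSys cst cst' M M' := by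
  have hiso0 : Iso cst cst' M.s0 M'.s0 := habs.2.1.1
  have : Nonempty U' := hiso0.elim fun ι _ => ⟨ι (Classical.arbitrary U)⟩
  have hfwd := isOSim_of_trTransfer hM (injExtendable_of_bBounded hb hcard)
    (trTransfer_of_bBounded hb hcard habs) hiso0 h0
  have hbwd := isOSim_of_trTransfer hM' injExtendable_of_infinite
    (trTransfer_symm_of_uniformT hu.1 habs) hiso0.symm (hiso0.adomF_subset_range h0)
  have hR : (fun s' s => s' ∈ M'.S ∧ s ∈ M.S ∧ Iso cst' cst s' s) =
      fun s' s => s ∈ M.S ∧ s' ∈ M'.S ∧ Iso cst cst' s s' := by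
    ext s' s
    rw [iso_comm]
    exact and_left_comm
  exact ⟨_, ⟨hfwd, hR ▸ hbwd⟩, M.s0_mem, M'.s0_mem, hiso0⟩

theorem statement13
    {D : Schema} {C : Type} [Fintype C] {n : ℕ}
    {sig : Fin (n+1) → AgentSig} {U U' : Type} [Infinite U]
    (cst : C → U) (cst' : C → U')
    (hcst : Function.Injective cst) (hcst' : Function.Injective cst')
    {Ag : ∀ i, Agent D (sig i) U} {Ag' : ∀ i, Agent D (sig i) U'}
    (M : ACMAS D sig Ag) (M' : ACMAS D sig Ag')
    (hM : M.Std) (hM' : M'.Std)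
    (hu : Uniform cst M)
    (b : ℕ) (hb : BBounded M b)
    (h0 : adomF M.s0 ⊆ Set.range cst)
    (hcard : ((2*b + Nat.card C + NAg sig : ℕ) : Cardinal) ≤ Cardinal.mk U')
    (habs : IsOAbstraction cst cst' M M') :
    OBisimSys cst cst' M M' :=
  statement13_general cst cst' M M' hM hM' hu b hb h0 hcard habs
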